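/- arXiv:2412.05399 — 3 statements merged into one kernel-verified Lean document; each statement's English description precedes it below -/
import Mathlib

section
/- Let a, b, c, d, c̄, L be real with c̄ > 0, L > 0, b ≠ 0, and let n be a positive integer. Define s_n^± = (a+d)/2 ± √(bc − π²n²c̄²/L²). Then the two eigenvalues λ₁(s), λ₂(s) of M(s) = Λ⁻¹(B̃ − sI) at s = s_n^± are distinct and satisfy exp(λ₁(s)L) = exp(λ₂(s)L). -/
open Complex
open scoped Real

/-!
At `s = (a + d)/2 ± q` the discriminant of `M(s)` collapses to `4 (q² - bc)/c̄²`, which for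
`q² = bc - π²n²c̄²/L²` is `-(2πn/L)²`. Hence `λ₁ - λ₂ = √Δ = ±2πn i/L` is nonzero, while
`(λ₁ - λ₂) L ∈ 2πi ℤ` makes the two exponentials agree.
-/

lemma discriminant_eq_sq_sub_div {K : Type*} [Field K] (a b c d cbar s : K) :
    ((a - d) / cbar) ^ 2 - 4 * ((b * c - (a - s) * (d - s)) / cbar ^ 2)
      = ((2 * s - (a + d)) ^ 2 - 4 * (b * c)) / cbar ^ 2 := by
  ring

lemma discriminant_mul_sq_eq_at_root (a b c d cbar L : ℝ) (hc : cbar ≠ 0) (hL : L ≠ 0) (n : ℕ)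
    (sq : ℂ) (hsq : sq ^ 2 = (b : ℂ) * c - (π : ℂ) ^ 2 * (n : ℂ) ^ 2 * (cbar : ℂ) ^ 2 / (L : ℂ) ^ 2)
    (s : ℂ) (hs : s = ((a : ℂ) + d) / 2 + sq ∨ s = ((a : ℂ) + d) / 2 - sq) :
    ((((a : ℂ) - d) / cbar) ^ 2
        - 4 * (((b : ℂ) * c - ((a : ℂ) - s) * ((d : ℂ) - s)) / (cbar : ℂ) ^ 2)) * (L : ℂ) ^ 2
      = (2 * π * I * n) ^ 2 := by
  have hshift : (2 * s - (a + d)) ^ 2 = 4 * sq ^ 2 := by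
    rcases hs with rfl | rfl <;> ring
  have hc' : (cbar : ℂ) ≠ 0 := by exact_mod_cast hc
  have hL' : (L : ℂ) ≠ 0 := by exact_mod_cast hL
  rw [discriminant_eq_sq_sub_div, hshift, hsq]
  field_simp
  linear_combination (-4 * (π : ℂ) ^ 2 * (n : ℂ) ^ 2 * (cbar : ℂ) ^ 2) * I_sq

lemma Complex.exp_eq_exp_of_sub_sq_eq {x y : ℂ} (k : ℤ) (h : (x - y) ^ 2 = (2 * π * I * k) ^ 2) :
    exp x = exp y := by
  refine exp_eq_exp_iff_exists_int.mpr ?_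
  rcases sq_eq_sq_iff_eq_or_eq_neg.mp h with h | h
  · exact ⟨k, by linear_combination h⟩
  · exact ⟨-k, by push_cast; linear_combination h⟩

theorem case2_complex_roots_general (a b c d cbar L : ℝ)
    (hc : 0 < cbar) (hL : 0 < L)
    (n : ℕ) (hn : 0 < n)
    (sq : ℂ) (hsq : sq ^ 2 = (b : ℂ) * c - (Real.pi : ℂ) ^ 2 * (n : ℂ) ^ 2 * (cbar : ℂ) ^ 2 / (L : ℂ) ^ 2)
    (s : ℂ) (hs : s = ((a : ℂ) + d) / 2 + sq ∨ s = ((a : ℂ) + d) / 2 - sq)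
    (Δ : ℂ) (hΔ : Δ = (((a : ℂ) - d) / cbar) ^ 2
        - 4 * (((b : ℂ) * c - ((a : ℂ) - s) * ((d : ℂ) - s)) / (cbar : ℂ) ^ 2))
    (sqΔ : ℂ) (hsqΔ : sqΔ ^ 2 = Δ)
    (lam1 lam2 : ℂ)
    (hlam1 : lam1 = -((a : ℂ) - d) / (2 * cbar) + sqΔ / 2)
    (hlam2 : lam2 = -((a : ℂ) - d) / (2 * cbar) - sqΔ / 2) :
    lam1 ≠ lam2 ∧ Complex.exp (lam1 * L) = Complex.exp (lam2 * L) := by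
  have hgap : (lam1 * L - lam2 * L) ^ 2 = (2 * π * I * n) ^ 2 := by
    rw [← discriminant_mul_sq_eq_at_root a b c d cbar L hc.ne' hL.ne' n sq hsq s hs, ← hΔ,
      ← hsqΔ, hlam1, hlam2]
    ring
  refine ⟨fun h => ?_, exp_eq_exp_of_sub_sq_eq n (mod_cast hgap)⟩
  rw [h, sub_self, eq_comm] at hgap
  simp [hn.ne'] at hgap

theorem case2_complex_roots (a b c d cbar L : ℝ)
    (hc : 0 < cbar) (hL : 0 < L) (hb : b ≠ 0)
    (n : ℕ) (hn : 0 < n)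
    (sq : ℂ) (hsq : sq ^ 2 = (b : ℂ) * c - (Real.pi : ℂ) ^ 2 * (n : ℂ) ^ 2 * (cbar : ℂ) ^ 2 / (L : ℂ) ^ 2)
    (s : ℂ) (hs : s = ((a : ℂ) + d) / 2 + sq ∨ s = ((a : ℂ) + d) / 2 - sq)
    (Δ : ℂ) (hΔ : Δ = (((a : ℂ) - d) / cbar) ^ 2
        - 4 * (((b : ℂ) * c - ((a : ℂ) - s) * ((d : ℂ) - s)) / (cbar : ℂ) ^ 2))
    (sqΔ : ℂ) (hsqΔ : sqΔ ^ 2 = Δ)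
    (lam1 lam2 : ℂ)
    (hlam1 : lam1 = -((a : ℂ) - d) / (2 * cbar) + sqΔ / 2)
    (hlam2 : lam2 = -((a : ℂ) - d) / (2 * cbar) - sqΔ / 2) :
    lam1 ≠ lam2 ∧ Complex.exp (lam1 * L) = Complex.exp (lam2 * L) :=
  case2_complex_roots_general a b c d cbar L hc hL n hn sq hsq s hs Δ hΔ sqΔ hsqΔ lam1 lam2 hlam1
    hlam2
end

section
/- Let a, b, c, d, c̄, L be real with c̄ > 0, L > 0, b ≠ 0, R ∈ {−1, 1}, and let s₀ = (a + R(b+c) + d)/2. Assume disc(M(s₀)) ≠ 0, and let v₁, v₂ be the eigenvectors v_{1,2} = (1, (−(a−s₀) − λ_{1,2}c̄)/b) of M(s₀). Then (−1 + R·v₁⁽²⁾)(−R + v₂⁽²⁾) = 0, i.e., s₀ is a root of the spectral equation (exp(λ₁L) − exp(λ₂L))(−1 + R·v₁⁽²⁾)(−R + v₂⁽²⁾) = 0. -/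
/-!
The eigenvalues of `M(s)` are the roots of its characteristic polynomial, so by Vieta the slopes
`p_i = (-(a - s) - λ_i c̄) / b` of the eigenvectors satisfy `p₁ + p₂ = (2s - a - d) / b` and
`p₁ p₂ = c / b`, for every `s`. At `s₀` the sum becomes `R (1 + c / b)`, so, as `R² = 1`, the slopes
are the roots of `(X - R)(X - R c / b)`; one of them equals `R`, which kills one of the two factors.
-/

open Complex

section Vieta

variable {K : Type*} [Field K] {a b c d cbar s r lam1 lam2 : K}

theorem eigenvalues_add_mul [CharZero K] (hc : cbar ≠ 0)
    (hr : r ^ 2 = ((a - d) / cbar) ^ 2 - 4 * ((b * c - (a - s) * (d - s)) / cbar ^ 2)) :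
    ((-(a - d) / (2 * cbar) + r / 2) + (-(a - d) / (2 * cbar) - r / 2)) * cbar = d - a ∧
      (-(a - d) / (2 * cbar) + r / 2) * (-(a - d) / (2 * cbar) - r / 2) * cbar ^ 2 =
        b * c - (a - s) * (d - s) := by
  constructor
  · field_simp
    ring
  · have hr' : cbar ^ 2 * r ^ 2 = (a - d) ^ 2 - 4 * (b * c - (a - s) * (d - s)) := by
      rw [hr]
      field_simp
    field_simp
    linear_combination -hr'

theorem eigenvectorSlope_add (hsum : (lam1 + lam2) * cbar = d - a) :
    (-(a - s) - lam1 * cbar) / b + (-(a - s) - lam2 * cbar) / b = (2 * s - a - d) / b := by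
  rw [← add_div]
  congr 1
  linear_combination -hsum

theorem eigenvectorSlope_mul (hb : b ≠ 0) (hsum : (lam1 + lam2) * cbar = d - a)
    (hprod : lam1 * lam2 * cbar ^ 2 = b * c - (a - s) * (d - s)) :
    (-(a - s) - lam1 * cbar) / b * ((-(a - s) - lam2 * cbar) / b) = c / b := by
  field_simp
  linear_combination (a - s) * hsum + hprod

end Vieta

theorem neg_one_add_mul_mul_neg_add_eq_zero {K : Type*} [CommRing K] {R p1 p2 q : K}
    (hR : R ^ 2 = 1) (hsum : p1 + p2 = R * (1 + q)) (hprod : p1 * p2 = q) :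
    (-1 + R * p1) * (-R + p2) = 0 := by
  linear_combination R * hprod - hsum - p1 * hR

theorem case2_real_root_general (a b c d cbar L R : ℝ)
    (hc : 0 < cbar) (hb : b ≠ 0)
    (hR : R = -1 ∨ R = 1)
    (s0 : ℂ) (hs0 : s0 = ((a : ℂ) + R * ((b : ℂ) + c) + d) / 2)
    (Δ : ℂ) (hΔ : Δ = (((a : ℂ) - d) / cbar) ^ 2
        - 4 * (((b : ℂ) * c - ((a : ℂ) - s0) * ((d : ℂ) - s0)) / (cbar : ℂ) ^ 2))
    (sqΔ : ℂ) (hsqΔ : sqΔ ^ 2 = Δ)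
    (lam1 lam2 : ℂ)
    (hlam1 : lam1 = -((a : ℂ) - d) / (2 * cbar) + sqΔ / 2)
    (hlam2 : lam2 = -((a : ℂ) - d) / (2 * cbar) - sqΔ / 2)
    (p1 p2 : ℂ)
    (hp1 : p1 = (-((a : ℂ) - s0) - lam1 * cbar) / b)
    (hp2 : p2 = (-((a : ℂ) - s0) - lam2 * cbar) / b) :
    (-1 + (R : ℂ) * p1) * (-(R : ℂ) + p2) = 0 ∧
      (Complex.exp (lam1 * L) - Complex.exp (lam2 * L)) *
        ((-1 + (R : ℂ) * p1) * (-(R : ℂ) + p2)) = 0 := by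
  have hb' : (b : ℂ) ≠ 0 := ofReal_ne_zero.mpr hb
  have hR2 : (R : ℂ) ^ 2 = 1 := by rcases hR with rfl | rfl <;> norm_num
  obtain ⟨hlam_add, hlam_mul⟩ :=
    eigenvalues_add_mul (ofReal_ne_zero.mpr hc.ne') (hsqΔ.trans hΔ)
  rw [← hlam1, ← hlam2] at hlam_add hlam_mul
  have hsum : p1 + p2 = R * (1 + c / b) := by
    rw [hp1, hp2, eigenvectorSlope_add hlam_add, hs0]
    field_simp
    ring
  have hprod : p1 * p2 = c / b := by
    rw [hp1, hp2, eigenvectorSlope_mul hb' hlam_add hlam_mul]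
  have hzero := neg_one_add_mul_mul_neg_add_eq_zero hR2 hsum hprod
  exact ⟨hzero, by rw [hzero, mul_zero]⟩

theorem case2_real_root (a b c d cbar L R : ℝ)
    (hc : 0 < cbar) (hL : 0 < L) (hb : b ≠ 0)
    (hR : R = -1 ∨ R = 1)
    (s0 : ℂ) (hs0 : s0 = ((a : ℂ) + R * ((b : ℂ) + c) + d) / 2)
    (Δ : ℂ) (hΔ : Δ = (((a : ℂ) - d) / cbar) ^ 2
        - 4 * (((b : ℂ) * c - ((a : ℂ) - s0) * ((d : ℂ) - s0)) / (cbar : ℂ) ^ 2))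
    (hΔne : Δ ≠ 0)
    (sqΔ : ℂ) (hsqΔ : sqΔ ^ 2 = Δ)
    (lam1 lam2 : ℂ)
    (hlam1 : lam1 = -((a : ℂ) - d) / (2 * cbar) + sqΔ / 2)
    (hlam2 : lam2 = -((a : ℂ) - d) / (2 * cbar) - sqΔ / 2)
    (p1 p2 : ℂ)
    (hp1 : p1 = (-((a : ℂ) - s0) - lam1 * cbar) / b)
    (hp2 : p2 = (-((a : ℂ) - s0) - lam2 * cbar) / b) :
    (-1 + (R : ℂ) * p1) * (-(R : ℂ) + p2) = 0 ∧
      (Complex.exp (lam1 * L) - Complex.exp (lam2 * L)) *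
        ((-1 + (R : ℂ) * p1) * (-(R : ℂ) + p2)) = 0 :=
  case2_real_root_general a b c d cbar L R hc hb hR s0 hs0 Δ hΔ sqΔ hsqΔ lam1 lam2 hlam1 hlam2 p1 p2
    hp1 hp2
end

section
/- Consider the semi-discrete scheme W_t = 𝒟_h W where 𝒟_h = −Λ_D + B̃ + P with Λ_D = (Λ ⊗ D), penalty matrix P built with parameters α₀ = −c̄, α_L = −c̄ (constant c̄ > 0), and D an SBP operator (HD = Q, uᵀ(Q+Qᵀ)v = u_Nv_N − u₀v₀, H diagonal positive-definite). If |R₀| ≤ 1 and |R_L| ≤ 1, then the discrete energy E_h = WᵀH₂W with H₂ = I₂ ⊗ H satisfies dE_h/dt ≤ 2‖B̃‖_H · E_h along solutions. -/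
/-!
Write `w = W t` and `H₂ = I₂ ⊗ H`; the energy rate is `2 wᵀ H₂ 𝒟_h w` because `H₂` is symmetric.
Since `H₂ (Λ ⊗ D) = Λ ⊗ Q`, the SBP property reduces the advection part to boundary values,
and `H₂ P = H₂ H₂⁻¹ (…)` involves only boundary values as well. Together they form
`−c̄[w₁₀²(1−R₀²) + (w₂₀ − R₀w₁₀)²] − c̄[w₂ₙ²(1−R_L²) + (w₁ₙ − R_Lw₂ₙ)²] ≤ 0`,
where the components `w₁, w₂` are `w (0, ·), w (1, ·)`. The coupling term `B̃ ⊗ I` is bounded by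
Cauchy–Schwarz for the inner product defined by `H₂`.
-/

open Matrix Kronecker

namespace Matrix

variable {ι κ R : Type*} [Fintype ι] [Fintype κ]

theorem two_mul_dotProduct_mulVec_self [CommSemiring R] (A : Matrix ι ι R) (x : ι → R) :
    2 * (x ⬝ᵥ A *ᵥ x) = x ⬝ᵥ (A + Aᵀ) *ᵥ x := by
  rw [add_mulVec, dotProduct_add, mulVec_transpose, dotProduct_comm x (x ᵥ* A),
    ← dotProduct_mulVec, two_mul]

theorem dotProduct_single_mulVec [CommSemiring R] [DecidableEq ι] (w : ι → R) (i j : ι) :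
    w ⬝ᵥ single i j 1 *ᵥ w = w i * w j := by
  rw [single_mulVec, one_mul]
  exact dotProduct_single w (w j) i

theorem dotProduct_diagonal_kronecker_mulVec [CommSemiring R] [DecidableEq κ] (d : κ → R)
    (A : Matrix ι ι R) (w : κ × ι → R) :
    w ⬝ᵥ (diagonal d ⊗ₖ A) *ᵥ w = ∑ k, d k * ((fun i => w (k, i)) ⬝ᵥ A *ᵥ fun i => w (k, i)) := by
  simp only [dotProduct, mulVec, kroneckerMap_apply, diagonal_apply, ite_mul, zero_mul,
    Fintype.sum_prod_type, Finset.sum_ite_irrel, Finset.sum_const_zero, Finset.sum_ite_eq,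
    Finset.mem_univ, if_true, Finset.mul_sum]
  exact Finset.sum_congr rfl fun k _ => Finset.sum_congr rfl fun i _ =>
    Finset.sum_congr rfl fun j _ => by ring

theorem dotProduct_vecMulVec_single_kronecker_mulVec [CommSemiring R] [DecidableEq ι]
    [DecidableEq κ] (a b : κ) (i j : ι) (w : κ × ι → R) :
    w ⬝ᵥ (vecMulVec (Pi.single a 1) (Pi.single b 1) ⊗ₖ
      vecMulVec (Pi.single i 1) (Pi.single j 1)) *ᵥ w = w (a, i) * w (b, j) := by
  rw [← single_eq_single_vecMulVec_single, ← single_eq_single_vecMulVec_single,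
    single_kronecker_single, one_mul, dotProduct_single_mulVec]

theorem PosSemidef.dotProduct_mulVec_le_sqrt_mul_sqrt {M : Matrix ι ι ℝ} (hM : M.PosSemidef)
    (x y : ι → ℝ) : x ⬝ᵥ M *ᵥ y ≤ √(x ⬝ᵥ M *ᵥ x) * √(y ⬝ᵥ M *ᵥ y) := by
  let _ := M.toSeminormedAddCommGroup hM
  let _ := M.toInnerProductSpace hM
  have hinner : ∀ u v : ι → ℝ, inner ℝ u v = u ⬝ᵥ M *ᵥ v := fun u v =>
    (dotProduct_comm _ _).trans (by simp)
  simpa only [norm_eq_sqrt_real_inner, hinner] using real_inner_le_norm x y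

theorem PosSemidef.dotProduct_mulVec_le_mul_of_sqrt_le {M : Matrix ι ι ℝ} (hM : M.PosSemidef)
    {x y : ι → ℝ} {μ : ℝ} (h : √(y ⬝ᵥ M *ᵥ y) ≤ μ * √(x ⬝ᵥ M *ᵥ x)) :
    x ⬝ᵥ M *ᵥ y ≤ μ * (x ⬝ᵥ M *ᵥ x) :=
  calc x ⬝ᵥ M *ᵥ y ≤ √(x ⬝ᵥ M *ᵥ x) * √(y ⬝ᵥ M *ᵥ y) := hM.dotProduct_mulVec_le_sqrt_mul_sqrt x y
    _ ≤ √(x ⬝ᵥ M *ᵥ x) * (μ * √(x ⬝ᵥ M *ᵥ x)) := by gcongr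
    _ = μ * (x ⬝ᵥ M *ᵥ x) := by
      rw [mul_left_comm, Real.mul_self_sqrt (by simpa using hM.dotProduct_mulVec_nonneg x)]

theorem hasDerivAt_dotProduct_mulVec_self {A : Matrix ι ι ℝ} (hA : Aᵀ = A) {W : ℝ → ι → ℝ}
    {W' : ι → ℝ} {t : ℝ} (hW : HasDerivAt W W' t) :
    HasDerivAt (fun s => W s ⬝ᵥ A *ᵥ W s) (2 * (W t ⬝ᵥ A *ᵥ W')) t := by
  have hWi : ∀ i, HasDerivAt (fun s => W s i) (W' i) t := hasDerivAt_pi.mp hW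
  have hAW : ∀ i, HasDerivAt (fun s => (A *ᵥ W s) i) ((A *ᵥ W') i) t := fun i =>
    HasDerivAt.fun_sum fun j _ => (hWi j).const_mul (A i j)
  refine (HasDerivAt.fun_sum (u := Finset.univ) fun i _ => (hWi i).fun_mul (hAW i)).congr_deriv ?_
  have hsym : W' ⬝ᵥ A *ᵥ W t = W t ⬝ᵥ A *ᵥ W' := by
    rw [dotProduct_mulVec, dotProduct_comm, ← mulVec_transpose, hA]
  rw [Finset.sum_add_distrib]
  change W' ⬝ᵥ A *ᵥ W t + W t ⬝ᵥ A *ᵥ W' = _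
  rw [hsym, two_mul]

end Matrix

theorem two_mul_dotProduct_mulVec_diagonal_kronecker_of_sbp {κ : Type*} [Fintype κ]
    [DecidableEq κ] {N : ℕ} (lam : κ → ℝ) {H D Q : Matrix (Fin (N + 1)) (Fin (N + 1)) ℝ}
    (hHD : H * D = Q)
    (hSBP : ∀ u v : Fin (N + 1) → ℝ,
      u ⬝ᵥ (Q + Qᵀ).mulVec v = u (Fin.last N) * v (Fin.last N) - u 0 * v 0)
    (w : κ × Fin (N + 1) → ℝ) :
    2 * (w ⬝ᵥ ((1 : Matrix κ κ ℝ) ⊗ₖ H) *ᵥ (diagonal lam ⊗ₖ D) *ᵥ w)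
      = ∑ k, lam k * (w (k, Fin.last N) ^ 2 - w (k, 0) ^ 2) := by
  rw [mulVec_mulVec, ← mul_kronecker_mul, one_mul, hHD, dotProduct_diagonal_kronecker_mulVec,
    Finset.mul_sum]
  refine Finset.sum_congr rfl fun k _ => ?_
  rw [mul_left_comm, two_mul_dotProduct_mulVec_self, hSBP, sq, sq]

theorem two_mul_dotProduct_mulVec_sat_penalty {N : ℕ} (c R₀ R_L : ℝ)
    {M : Matrix (Fin 2 × Fin (N + 1)) (Fin 2 × Fin (N + 1)) ℝ} (hM : IsUnit M.det)
    (w : Fin 2 × Fin (N + 1) → ℝ) :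
    2 * (w ⬝ᵥ M *ᵥ
      ((-c) • (M⁻¹ *
          ((vecMulVec (Pi.single 1 1) (Pi.single 1 1)) ⊗ₖ
              (vecMulVec (Pi.single 0 1) (Pi.single 0 1))
            - R₀ • ((vecMulVec (Pi.single 1 1) (Pi.single 0 1)) ⊗ₖ
              (vecMulVec (Pi.single 0 1) (Pi.single 0 1)))))
        + (-c) • (M⁻¹ *
          ((vecMulVec (Pi.single 0 1) (Pi.single 0 1)) ⊗ₖ
              (vecMulVec (Pi.single (Fin.last N) 1) (Pi.single (Fin.last N) 1))
            - R_L • ((vecMulVec (Pi.single 0 1) (Pi.single 1 1)) ⊗ₖ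
              (vecMulVec (Pi.single (Fin.last N) 1) (Pi.single (Fin.last N) 1)))))) *ᵥ w)
      = -2 * c * w (1, 0) * (w (1, 0) - R₀ * w (0, 0))
        - 2 * c * w (0, Fin.last N) * (w (0, Fin.last N) - R_L * w (1, Fin.last N)) := by
  rw [mulVec_mulVec, mul_add, Matrix.mul_smul, Matrix.mul_smul,
    mul_nonsing_inv_cancel_left _ _ hM, mul_nonsing_inv_cancel_left _ _ hM]
  simp only [add_mulVec, smul_mulVec, sub_mulVec, dotProduct_add, dotProduct_smul,
    dotProduct_sub, smul_eq_mul, dotProduct_vecMulVec_single_kronecker_mulVec]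
  ring

theorem sat_boundary_terms_nonpos {c R₀ R_L : ℝ} (hc : 0 ≤ c) (hR₀ : |R₀| ≤ 1) (hR_L : |R_L| ≤ 1)
    (w₁₀ w₁ₙ w₂₀ w₂ₙ : ℝ) :
    -c * w₁₀ ^ 2 + c * w₁ₙ ^ 2 + c * w₂₀ ^ 2 - c * w₂ₙ ^ 2 - 2 * c * w₂₀ * (w₂₀ - R₀ * w₁₀)
      - 2 * c * w₁ₙ * (w₁ₙ - R_L * w₂ₙ) ≤ 0 := by
  have h₀ : 0 ≤ 1 - R₀ ^ 2 := sub_nonneg.mpr (sq_le_one_iff_abs_le_one R₀ |>.mpr hR₀)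
  have h_L : 0 ≤ 1 - R_L ^ 2 := sub_nonneg.mpr (sq_le_one_iff_abs_le_one R_L |>.mpr hR_L)
  calc _ = -c * (w₁₀ ^ 2 * (1 - R₀ ^ 2) + (w₂₀ - R₀ * w₁₀) ^ 2)
        - c * (w₂ₙ ^ 2 * (1 - R_L ^ 2) + (w₁ₙ - R_L * w₂ₙ) ^ 2) := by ring
    _ ≤ 0 := by
      have := mul_nonneg hc <|
        add_nonneg (mul_nonneg (sq_nonneg w₁₀) h₀) (sq_nonneg (w₂₀ - R₀ * w₁₀))
      have := mul_nonneg hc <|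
        add_nonneg (mul_nonneg (sq_nonneg w₂ₙ) h_L) (sq_nonneg (w₁ₙ - R_L * w₂ₙ))
      linarith

theorem sbp_sat_energy_estimate_general (N : ℕ) (cbar R0 RL μ : ℝ)
    (hc : 0 < cbar) (hR0 : |R0| ≤ 1) (hRL : |RL| ≤ 1)
    (H D Qm : Matrix (Fin (N + 1)) (Fin (N + 1)) ℝ)
    (hHpd : H.PosDef) (hHD : H * D = Qm)
    (hSBP : ∀ u v : Fin (N + 1) → ℝ,
      u ⬝ᵥ (Qm + Qmᵀ).mulVec v = u (Fin.last N) * v (Fin.last N) - u 0 * v 0)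
    (Btil : Matrix (Fin 2) (Fin 2) ℝ)
    (Lam : Matrix (Fin 2) (Fin 2) ℝ) (hLam : Lam = !![-cbar, 0; 0, cbar])
    (e0 eN : Fin (N + 1) → ℝ)
    (he0 : e0 = Pi.single 0 1) (heN : eN = Pi.single (Fin.last N) 1)
    (E1 E2 : Fin 2 → ℝ) (hE1 : E1 = Pi.single 0 1) (hE2 : E2 = Pi.single 1 1)
    (H2 : Matrix (Fin 2 × Fin (N + 1)) (Fin 2 × Fin (N + 1)) ℝ)
    (hH2 : H2 = (1 : Matrix (Fin 2) (Fin 2) ℝ) ⊗ₖ H)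
    (P : Matrix (Fin 2 × Fin (N + 1)) (Fin 2 × Fin (N + 1)) ℝ)
    (hP : P = (-cbar) • (H2⁻¹ *
          ((vecMulVec E2 E2) ⊗ₖ (vecMulVec e0 e0)
            - R0 • ((vecMulVec E2 E1) ⊗ₖ (vecMulVec e0 e0))))
        + (-cbar) • (H2⁻¹ *
          ((vecMulVec E1 E1) ⊗ₖ (vecMulVec eN eN)
            - RL • ((vecMulVec E1 E2) ⊗ₖ (vecMulVec eN eN)))))
    (Dh : Matrix (Fin 2 × Fin (N + 1)) (Fin 2 × Fin (N + 1)) ℝ)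
    (hDh : Dh = -(Lam ⊗ₖ D) + (Btil ⊗ₖ (1 : Matrix (Fin (N + 1)) (Fin (N + 1)) ℝ)) + P)
    -- μ is an H-operator-norm bound for B̃ ⊗ I
    (hμ : ∀ v : Fin 2 × Fin (N + 1) → ℝ,
      Real.sqrt (((Btil ⊗ₖ (1 : Matrix (Fin (N + 1)) (Fin (N + 1)) ℝ)).mulVec v) ⬝ᵥ
          H2.mulVec ((Btil ⊗ₖ (1 : Matrix (Fin (N + 1)) (Fin (N + 1)) ℝ)).mulVec v))
        ≤ μ * Real.sqrt (v ⬝ᵥ H2.mulVec v))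
    (W : ℝ → (Fin 2 × Fin (N + 1)) → ℝ)
    (hW : ∀ t, HasDerivAt W (Dh.mulVec (W t)) t)
    (Eh : ℝ → ℝ) (hEh : Eh = fun t => W t ⬝ᵥ H2.mulVec (W t)) :
    ∀ t, deriv Eh t ≤ 2 * μ * Eh t := by
  subst hLam he0 heN hE1 hE2 hH2 hDh hEh
  intro t
  have hH2 : ((1 : Matrix (Fin 2) (Fin 2) ℝ) ⊗ₖ H).PosDef := PosDef.one.kronecker hHpd
  have hH2sym : ((1 : Matrix (Fin 2) (Fin 2) ℝ) ⊗ₖ H)ᵀ = 1 ⊗ₖ H := by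
    simpa [conjTranspose_eq_transpose_of_trivial] using hH2.isHermitian.eq
  rw [(hasDerivAt_dotProduct_mulVec_self hH2sym (hW t)).deriv]
  have hadvection :=
    two_mul_dotProduct_mulVec_diagonal_kronecker_of_sbp ![-cbar, cbar] hHD hSBP (W t)
  simp only [diagonal_vec2, Fin.sum_univ_two, cons_val_zero, cons_val_one, cons_val_fin_one]
    at hadvection
  have hpenalty := two_mul_dotProduct_mulVec_sat_penalty cbar R0 RL hH2.det_pos.ne'.isUnit (W t)
  rw [← hP] at hpenalty
  have hcoupling := hH2.posSemidef.dotProduct_mulVec_le_mul_of_sqrt_le (hμ (W t))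
  have hboundary := sat_boundary_terms_nonpos hc.le hR0 hRL
    (W t (0, 0)) (W t (0, Fin.last N)) (W t (1, 0)) (W t (1, Fin.last N))
  simp only [mulVec_add, add_mulVec, neg_mulVec, mulVec_neg, dotProduct_add, dotProduct_neg]
  linarith

theorem sbp_sat_energy_estimate (N : ℕ) (cbar R0 RL μ : ℝ)
    (hc : 0 < cbar) (hR0 : |R0| ≤ 1) (hRL : |RL| ≤ 1) (hμ0 : 0 ≤ μ)
    (H D Qm : Matrix (Fin (N + 1)) (Fin (N + 1)) ℝ)
    (hHdiag : H.IsDiag) (hHpd : H.PosDef) (hHD : H * D = Qm)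
    (hSBP : ∀ u v : Fin (N + 1) → ℝ,
      u ⬝ᵥ (Qm + Qmᵀ).mulVec v = u (Fin.last N) * v (Fin.last N) - u 0 * v 0)
    (Btil : Matrix (Fin 2) (Fin 2) ℝ)
    (Lam : Matrix (Fin 2) (Fin 2) ℝ) (hLam : Lam = !![-cbar, 0; 0, cbar])
    (e0 eN : Fin (N + 1) → ℝ)
    (he0 : e0 = Pi.single 0 1) (heN : eN = Pi.single (Fin.last N) 1)
    (E1 E2 : Fin 2 → ℝ) (hE1 : E1 = Pi.single 0 1) (hE2 : E2 = Pi.single 1 1)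
    (H2 : Matrix (Fin 2 × Fin (N + 1)) (Fin 2 × Fin (N + 1)) ℝ)
    (hH2 : H2 = (1 : Matrix (Fin 2) (Fin 2) ℝ) ⊗ₖ H)
    (P : Matrix (Fin 2 × Fin (N + 1)) (Fin 2 × Fin (N + 1)) ℝ)
    (hP : P = (-cbar) • (H2⁻¹ *
          ((vecMulVec E2 E2) ⊗ₖ (vecMulVec e0 e0)
            - R0 • ((vecMulVec E2 E1) ⊗ₖ (vecMulVec e0 e0))))
        + (-cbar) • (H2⁻¹ *
          ((vecMulVec E1 E1) ⊗ₖ (vecMulVec eN eN)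
            - RL • ((vecMulVec E1 E2) ⊗ₖ (vecMulVec eN eN)))))
    (Dh : Matrix (Fin 2 × Fin (N + 1)) (Fin 2 × Fin (N + 1)) ℝ)
    (hDh : Dh = -(Lam ⊗ₖ D) + (Btil ⊗ₖ (1 : Matrix (Fin (N + 1)) (Fin (N + 1)) ℝ)) + P)
    -- μ is an H-operator-norm bound for B̃ ⊗ I
    (hμ : ∀ v : Fin 2 × Fin (N + 1) → ℝ,
      Real.sqrt (((Btil ⊗ₖ (1 : Matrix (Fin (N + 1)) (Fin (N + 1)) ℝ)).mulVec v) ⬝ᵥ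
          H2.mulVec ((Btil ⊗ₖ (1 : Matrix (Fin (N + 1)) (Fin (N + 1)) ℝ)).mulVec v))
        ≤ μ * Real.sqrt (v ⬝ᵥ H2.mulVec v))
    (W : ℝ → (Fin 2 × Fin (N + 1)) → ℝ)
    (hW : ∀ t, HasDerivAt W (Dh.mulVec (W t)) t)
    (Eh : ℝ → ℝ) (hEh : Eh = fun t => W t ⬝ᵥ H2.mulVec (W t)) :
    ∀ t, deriv Eh t ≤ 2 * μ * Eh t :=
  sbp_sat_energy_estimate_general N cbar R0 RL μ hc hR0 hRL H D Qm hHpd hHD hSBP Btil Lam hLam e0 eN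
    he0 heN E1 E2 hE1 hE2 H2 hH2 P hP Dh hDh hμ W hW Eh hEh
end
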